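/- For every m ≥ 2 and path-connected metric space X, dTC_m(X) ≤ dcat(X^m). -/

import Mathlib

/-!
A contraction `H` of `X^m` to `y₀` assigns to each `x` finitely many paths `φ` in `X^m` from `x`
to `y₀`. Each such `φ` yields a path in `X` through `x 0, …, x (m - 1)` at the times `j / (m - 1)`:
on the `j`-th interval, run from `x j` to `y₀ j` along the `j`-th coordinate of `φ`, then along a
fixed path to `y₀ (j + 1)`, and back to `x (j + 1)` along the `(j + 1)`-th coordinate of `φ`.
On paths ending at `y₀` this construction is `1`-Lipschitz for the sup metric, so pushing each
`H x` forward along it does not increase Lévy–Prokhorov distances, and the result is a navigation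
algorithm with at most as many support points as `H`.
-/

open MeasureTheory unitInterval

noncomputable section

/-- The path space `P(X) = C([0,1], X)` with the compact-open topology. -/
abbrev PathSp (X : Type*) [TopologicalSpace X] : Type _ := C(unitInterval, X)

/-- The space `B_n(Z)` of probability measures on a metric space `Z` supported on at most
`n` points, as a subspace of the space of probability measures with the Lévy–Prokhorov metric. -/
def Bmeas (n : ℕ) (Z : Type*) [MetricSpace Z] : Type _ :=
  letI : MeasurableSpace Z := borel Z
  {μ : LevyProkhorov (ProbabilityMeasure Z) //
    ∃ S : Finset Z, S.card ≤ n ∧ (LevyProkhorov.toMeasureEquiv μ : ProbabilityMeasure Z) (↑S : Set Z) = 1}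

noncomputable instance (n : ℕ) (Z : Type*) [MetricSpace Z] : TopologicalSpace (Bmeas n Z) :=
  letI : MeasurableSpace Z := borel Z
  haveI : BorelSpace Z := ⟨rfl⟩
  instTopologicalSpaceSubtype

/-- The underlying probability measure of an element of `B_n(Z)`. -/
def Bmeas.meas {n : ℕ} {Z : Type*} [MetricSpace Z] (μ : Bmeas n Z) :
    @ProbabilityMeasure Z (borel Z) :=
  LevyProkhorov.toMeasureEquiv μ.1

/-- `μ ∈ B_n(Z)` is supported on the set `A`. -/
def DistributedOn {Z : Type*} [MetricSpace Z] {n : ℕ} (μ : Bmeas n Z) (A : Set Z) : Prop :=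
  ∃ S : Finset Z, (↑S : Set Z) ⊆ A ∧ Bmeas.meas μ (↑S : Set Z) = 1

/-- The time points `t_j = j/(m-1)`, `j = 0, …, m-1`, in `[0,1]`. -/
def tpt (m : ℕ) (j : Fin m) : unitInterval :=
  Set.projIcc 0 1 zero_le_one ((j : ℝ) / ((m : ℝ) - 1))

/-- A `k`-distributed `m`-navigation algorithm on `X`. -/
def IsNavAlg (m k : ℕ) {X : Type*} [MetricSpace X]
    (s : (Fin m → X) → Bmeas k (PathSp X)) : Prop :=
  Continuous s ∧ ∀ x : Fin m → X,
    DistributedOn (s x) {φ : PathSp X | ∀ j : Fin m, φ (tpt m j) = x j}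

/-- The `m`-th sequential distributional topological complexity. -/
noncomputable def dTC (m : ℕ) (X : Type*) [MetricSpace X] : ℕ∞ :=
  sInf {c : ℕ∞ | ∃ k : ℕ, c = k ∧
    ∃ s : (Fin m → X) → Bmeas (k + 1) (PathSp X), IsNavAlg m (k + 1) s}

/-- A `k`-contraction of `Y` to the point `y₀`. -/
def IsContr (k : ℕ) {Y : Type*} [MetricSpace Y] (y₀ : Y)
    (H : Y → Bmeas k (PathSp Y)) : Prop :=
  Continuous H ∧ ∀ y : Y,
    DistributedOn (H y) {φ : PathSp Y | φ 0 = y ∧ φ 1 = y₀}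

/-- The distributional Lusternik–Schnirelmann category. -/
noncomputable def dcat (Y : Type*) [MetricSpace Y] : ℕ∞ :=
  sInf {c : ℕ∞ | ∃ k : ℕ, c = k ∧
    ∃ (y₀ : Y) (H : Y → Bmeas (k + 1) (PathSp Y)), IsContr (k + 1) y₀ H}

/-- The classical `m`-th sequential topological complexity. -/
noncomputable def TCcl (m : ℕ) (X : Type*) [TopologicalSpace X] : ℕ∞ :=
  sInf {c : ℕ∞ | ∃ k : ℕ, c = k ∧
    ∃ (U : Fin (k + 1) → Set (Fin m → X)) (s : ∀ i : Fin (k + 1), C(U i, PathSp X)),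
      (∀ i, IsOpen (U i)) ∧ (∀ x, ∃ i, x ∈ U i) ∧
      ∀ (i : Fin (k + 1)) (x : U i) (j : Fin m), (s i x) (tpt m j) = (x : Fin m → X) j}

section LevyProkhorov

variable {Ω Z W : Type*} [MeasurableSpace Ω]

theorem aemeasurable_of_ae_mem_countable [MeasurableSpace W] [MeasurableSingletonClass Ω]
    {μ : Measure Ω} {S : Set Ω} (hS : S.Countable) (hμS : ∀ᵐ x ∂μ, x ∈ S) (g : Ω → W) :
    AEMeasurable g μ := by
  rw [← Measure.restrict_eq_self_of_ae_mem hμS,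
    aemeasurable_restrict_iff_comap_subtype hS.measurableSet]
  have := hS.to_subtype
  exact (measurable_of_countable _).aemeasurable

theorem MeasureTheory.ProbabilityMeasure.ae_mem_of_apply_eq_one {P : ProbabilityMeasure Ω}
    {s : Set Ω} (hs : MeasurableSet s) (h : P s = 1) : ∀ᵐ x ∂(P : Measure Ω), x ∈ s := by
  refine (mem_ae_iff_prob_eq_one hs).2 ?_
  rw [← ennreal_coeFn_eq_coeFn_toMeasure, h, ENNReal.coe_one]

theorem MeasureTheory.ProbabilityMeasure.map_apply_eq_one [MeasurableSpace W]
    {P : ProbabilityMeasure Ω} {g : Ω → W} (hg : AEMeasurable g P) {s : Set Ω} {t : Set W}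
    (ht : MeasurableSet t)
    (hst : Set.MapsTo g s t) (hs : P s = 1) : P.map hg t = 1 := by
  rw [ProbabilityMeasure.map_apply _ _ ht]
  exact le_antisymm (P.apply_le_one _) (hs ▸ P.apply_mono hst)

variable [PseudoMetricSpace Z] [MeasurableSpace Z] [PseudoMetricSpace W] [MeasurableSpace W]
  [OpensMeasurableSpace W]

theorem levyProkhorovEDist_map_le {μ ν : Measure Z} [IsProbabilityMeasure μ]
    [IsProbabilityMeasure ν] {E : Set Z} (hE : MeasurableSet E) {g : Z → W}
    (hg : LipschitzOnWith 1 g E) (hμE : ∀ᵐ z ∂μ, z ∈ E) (hνE : ∀ᵐ z ∂ν, z ∈ E)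
    (hgμ : AEMeasurable g μ) (hgν : AEMeasurable g ν) :
    levyProkhorovEDist (μ.map g) (ν.map g) ≤ levyProkhorovEDist μ ν := by
  have := Measure.isProbabilityMeasure_map (μ := μ) hgμ
  have := Measure.isProbabilityMeasure_map (μ := ν) hgν
  refine levyProkhorovEDist_le_of_forall_le _ _ _ fun ε B hε _ hB => ?_
  obtain ⟨t, htB, ht, htμ⟩ := (hgμ.nullMeasurableSet_preimage hB).exists_measurable_subset_ae_eq
  have hthick : Metric.thickening ε.toReal (t ∩ E) ∩ E ⊆ g ⁻¹' Metric.thickening ε.toReal B := by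
    rintro z ⟨hz, hzE⟩
    obtain ⟨z', ⟨hz't, hz'E⟩, hzz'⟩ := Metric.mem_thickening_iff.1 hz
    refine Metric.mem_thickening_iff.2 ⟨g z', htB hz't, ?_⟩
    simpa using (hg.dist_le_mul z hzE z' hz'E).trans_lt (by simpa using hzz')
  calc μ.map g B = μ (t ∩ E) := by
        rw [Measure.map_apply_of_aemeasurable hgμ hB, measure_inter_conull (ae_iff.1 hμE),
          measure_congr htμ]
  _ ≤ ν (Metric.thickening ε.toReal (t ∩ E)) + ε :=
        left_measure_le_of_levyProkhorovEDist_lt hε (ht.inter hE)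
  _ = ν (Metric.thickening ε.toReal (t ∩ E) ∩ E) + ε := by
        rw [measure_inter_conull (ae_iff.1 hνE)]
  _ ≤ ν.map g (Metric.thickening ε.toReal B) + ε := by
        rw [Measure.map_apply_of_aemeasurable hgν Metric.isOpen_thickening.measurableSet]
        gcongr

end LevyProkhorov

section Bmeas

variable {Z W : Type*} [MetricSpace Z] [MetricSpace W] {n : ℕ}

theorem Bmeas.aemeasurable (μ : Bmeas n Z) (g : Z → W) :
    letI := borel Z; letI := borel W; AEMeasurable g (Bmeas.meas μ).toMeasure := by
  let := borel Z
  let := borel W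
  have : BorelSpace Z := ⟨rfl⟩
  obtain ⟨S, -, hS⟩ := μ.2
  exact aemeasurable_of_ae_mem_countable S.countable_toSet
    ((Bmeas.meas μ).ae_mem_of_apply_eq_one S.finite_toSet.measurableSet hS) g

open scoped Classical in
def Bmeas.map (g : Z → W) (μ : Bmeas n Z) : Bmeas n W :=
  letI := borel Z
  letI := borel W
  haveI : BorelSpace W := ⟨rfl⟩
  ⟨LevyProkhorov.toMeasureEquiv.symm ((Bmeas.meas μ).map (μ.aemeasurable g)),
    μ.2.choose.image g, Finset.card_image_le.trans μ.2.choose_spec.1,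
    ProbabilityMeasure.map_apply_eq_one (μ.aemeasurable g) (Finset.finite_toSet _).measurableSet
      (fun _ hz => Finset.mem_coe.2 (Finset.mem_image_of_mem g hz)) μ.2.choose_spec.2⟩

theorem Bmeas.meas_map (g : Z → W) (μ : Bmeas n Z) :
    letI := borel Z; letI := borel W;
    Bmeas.meas (μ.map g) = (Bmeas.meas μ).map (μ.aemeasurable g) := rfl

theorem DistributedOn.mono {μ : Bmeas n Z} {A B : Set Z} (h : DistributedOn μ A) (hAB : A ⊆ B) :
    DistributedOn μ B :=
  let ⟨S, hSA, hS⟩ := h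
  ⟨S, hSA.trans hAB, hS⟩

theorem DistributedOn.map {μ : Bmeas n Z} {A : Set Z} {B : Set W} (h : DistributedOn μ A)
    {g : Z → W} (hg : Set.MapsTo g A B) : DistributedOn (μ.map g) B := by
  classical
  let := borel Z
  let := borel W
  have : BorelSpace W := ⟨rfl⟩
  obtain ⟨S, hSA, hS⟩ := h
  refine ⟨S.image g, by simpa using (hg.mono_left hSA).image_subset, ?_⟩
  rw [Bmeas.meas_map]
  exact ProbabilityMeasure.map_apply_eq_one (μ.aemeasurable g) (Finset.finite_toSet _).measurableSet
    (fun _ hz => Finset.mem_coe.2 (Finset.mem_image_of_mem g hz)) hS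

theorem DistributedOn.ae_mem {μ : Bmeas n Z} {A : Set Z} (h : DistributedOn μ A) :
    letI := borel Z; ∀ᵐ z ∂(Bmeas.meas μ).toMeasure, z ∈ A := by
  let := borel Z
  have : BorelSpace Z := ⟨rfl⟩
  obtain ⟨S, hSA, hS⟩ := h
  exact ((Bmeas.meas μ).ae_mem_of_apply_eq_one S.finite_toSet.measurableSet hS).mono
    fun _ hz => hSA hz

theorem Continuous.bmeasMap {Y : Type*} [TopologicalSpace Y] {H : Y → Bmeas n Z}
    (hH : Continuous H) {E : Set Z} (hE : IsClosed E) (hHE : ∀ y, DistributedOn (H y) E)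
    {g : Z → W} (hg : LipschitzOnWith 1 g E) : Continuous fun y => (H y).map g := by
  let := borel Z
  let := borel W
  have : BorelSpace Z := ⟨rfl⟩
  have : BorelSpace W := ⟨rfl⟩
  have hedist (y y' : Y) :
      EDist.edist ((H y).map g).1 ((H y').map g).1 ≤ EDist.edist (H y).1 (H y').1 :=
    levyProkhorovEDist_map_le hE.measurableSet hg (hHE y).ae_mem (hHE y').ae_mem
      ((H y).aemeasurable g) ((H y').aemeasurable g)
  have hH' : Continuous fun y => (H y).1 := continuous_subtype_val.comp hH
  refine Continuous.subtype_mk (continuous_iff_continuousAt.2 fun y => ?_) _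
  rw [ContinuousAt, tendsto_iff_edist_tendsto_0]
  exact tendsto_of_tendsto_of_tendsto_of_le_of_le tendsto_const_nhds
    (tendsto_iff_edist_tendsto_0.1 (hH'.tendsto y)) (fun _ => zero_le)
    fun y' => hedist y' y

end Bmeas

section Concat

variable {X : Type*} [TopologicalSpace X]

def concatPaths (a : ℕ → X) (p : ∀ j, Path (a j) (a (j + 1))) : ℕ → ℝ → X
  | 0, _ => a 0
  | n + 1, t => if t ≤ n then concatPaths a p n t else (p n).extend (t - n)

variable (a : ℕ → X) (p : ∀ j, Path (a j) (a (j + 1)))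

theorem concatPaths_of_le : ∀ {n : ℕ} {t : ℝ}, n ≤ t → concatPaths a p n t = a n
  | 0, _, _ => rfl
  | n + 1, t, ht => by
    push_cast at ht
    rw [concatPaths, if_neg (by linarith), Path.extend_of_one_le _ (by linarith)]

theorem concatPaths_natCast : ∀ {n j : ℕ}, j ≤ n → concatPaths a p n j = a j
  | 0, 0, _ => rfl
  | n + 1, j, hj => by
    rcases hj.lt_or_eq with hj | rfl
    · have hj : j ≤ n := Nat.le_of_lt_succ hj
      rw [concatPaths, if_pos (by exact_mod_cast hj), concatPaths_natCast hj]
    · exact concatPaths_of_le a p le_rfl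

theorem continuous_concatPaths : ∀ n, Continuous (concatPaths a p n)
  | 0 => continuous_const
  | n + 1 => by
    refine Continuous.if_le (continuous_concatPaths n)
      ((p n).continuous_extend.comp (continuous_sub_right _)) continuous_id continuous_const
      fun t ht => ?_
    rw [ht, concatPaths_of_le a p le_rfl, sub_self, Path.extend_zero]

end Concat

theorem dist_concatPaths_le {X : Type*} [PseudoMetricSpace X] {a b : ℕ → X}
    {p : ∀ j, Path (a j) (a (j + 1))} {q : ∀ j, Path (b j) (b (j + 1))} {d : ℝ}
    (h : ∀ j t, dist (p j t) (q j t) ≤ d) :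
    ∀ n t, dist (concatPaths a p n t) (concatPaths b q n t) ≤ d
  | 0, _ => by simpa [concatPaths] using h 0 0
  | n + 1, t => by
    rw [concatPaths, concatPaths]
    split_ifs
    · exact dist_concatPaths_le h n t
    · exact h n _

section Relay

variable {ι X : Type*}

def relayPath [TopologicalSpace X] [PathConnectedSpace X] (φ : C(I, ι → X)) (i i' : ι) :
    Path (φ 0 i) (φ 0 i') :=
  let γ : Path (φ 0) (φ 1) := ⟨φ, rfl, rfl⟩
  (γ.map (continuous_apply i)).trans
    ((PathConnectedSpace.somePath _ _).trans (γ.map (continuous_apply i')).symm)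

theorem dist_relayPath_apply_le [PseudoMetricSpace X] [PathConnectedSpace X]
    [Fintype ι] {φ ψ : C(I, ι → X)} (h1 : φ 1 = ψ 1) (i i' : ι) (t : I) :
    dist (relayPath φ i i' t) (relayPath ψ i i' t) ≤ dist φ ψ := by
  have hcoord (i : ι) (s : I) : dist (φ s i) (ψ s i) ≤ dist φ ψ :=
    (dist_le_pi_dist (φ s) (ψ s) i).trans (ContinuousMap.dist_apply_le_dist s)
  simp only [relayPath, Path.trans_apply, Path.symm_apply, Path.map_coe]
  split_ifs
  · exact hcoord _ _
  · rw [h1, dist_self]; exact dist_nonneg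
  · exact hcoord _ _

end Relay

section Navigation

variable {X : Type*} {n : ℕ}

theorem natCast_mul_tpt_succ (j : Fin (n + 1)) : (n : ℝ) * tpt (n + 1) j = j := by
  rcases n.eq_zero_or_pos with rfl | hn
  · simp [Fin.fin_one_eq_zero j]
  · have hj : (j : ℝ) ≤ n := by exact_mod_cast j.is_le
    rw [tpt, Nat.cast_succ, add_sub_cancel_right,
      Set.projIcc_of_mem _ ⟨by positivity, div_le_one_of_le₀ hj n.cast_nonneg⟩]
    field_simp

def navPath [TopologicalSpace X] [PathConnectedSpace X] (φ : C(I, Fin (n + 1) → X)) : C(I, X) :=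
  ⟨fun t => concatPaths (fun j => φ 0 (Fin.clamp j n))
      (fun j => relayPath φ (Fin.clamp j n) (Fin.clamp (j + 1) n)) n (n * t),
    (continuous_concatPaths _ _ n).comp (continuous_const.mul continuous_subtype_val)⟩

theorem navPath_apply_tpt [TopologicalSpace X] [PathConnectedSpace X] (φ : C(I, Fin (n + 1) → X))
    (j : Fin (n + 1)) :
    navPath φ (tpt (n + 1) j) = φ 0 j := by
  change concatPaths _ _ n _ = _
  rw [natCast_mul_tpt_succ, concatPaths_natCast _ _ j.is_le]
  exact congrArg (φ 0) (Fin.ext (min_eq_left j.is_le))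

theorem lipschitzOnWith_navPath [PseudoMetricSpace X] [PathConnectedSpace X]
    (y₀ : Fin (n + 1) → X) :
    LipschitzOnWith 1 (navPath (X := X)) {φ | φ 1 = y₀} :=
  LipschitzOnWith.mk_one fun _ hφ _ hψ => (ContinuousMap.dist_le dist_nonneg).2 fun t =>
    dist_concatPaths_le (fun j _ => dist_relayPath_apply_le (hφ.trans hψ.symm)
      (Fin.clamp j n) (Fin.clamp (j + 1) n) _) n (n * t)

end Navigation

/-- For every `m ≥ 2` and path-connected metric space `X`, `dTC_m(X) ≤ dcat(X^m)`. -/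
theorem dTC_le_dcat_pow (m : ℕ) (hm : 2 ≤ m) (X : Type) [MetricSpace X]
    [PathConnectedSpace X] :
    dTC m X ≤ dcat (Fin m → X) := by
  obtain ⟨n, rfl⟩ : ∃ n, m = n + 1 := ⟨m - 1, by omega⟩
  refine sInf_le_sInf ?_
  rintro _ ⟨k, rfl, y₀, H, hH, hHy⟩
  have hHE (x : Fin (n + 1) → X) : DistributedOn (H x) {φ | φ 1 = y₀} :=
    (hHy x).mono fun _ hφ => hφ.2
  refine ⟨k, rfl, fun x => (H x).map navPath, ?_, fun x => ?_⟩
  · exact hH.bmeasMap (isClosed_eq (continuous_eval_const 1) continuous_const)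
      hHE (lipschitzOnWith_navPath y₀)
  · exact (hHy x).map fun φ hφ j => by rw [navPath_apply_tpt, hφ.1]
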